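/- arXiv:2302.06224 — 2 statements merged into one kernel-verified Lean document; each statement's English description precedes it below -/
import Mathlib

section
/- Let K be a self-similar compact set of module μ and ratio ρ, and define T_u := K^(u) \ K^(u+1) for u ≥ 0. Then the sets T_u are pairwise disjoint, T_{u+nμ} = T_u / ρ^n for all n ≥ 0, and K \ {0} = ⋃_{n≥0} (T_0 ∪ T_1 ∪ ⋯ ∪ T_{μ−1}) / ρ^n. -/
open Ordinal Filter Topology Set

/-- The `n`-th derived set of `A ⊆ ℝ`. -/
noncomputable def iterDeriv (A : Set ℝ) (n : ℕ) : Set ℝ := (derivedSet (X := ℝ))^[n] A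

/-- The ordinal `ω ^ ω`. -/
noncomputable def wOmega : Ordinal.{0} := Ordinal.omega0 ^ Ordinal.omega0

/-- An enumeration of `K ⊆ ℝ` witnessing that `K`, with the reverse of the usual order,
is well-ordered with order type `ω ^ ω + 1`: its elements are exactly `e α` for
`α ≤ ω ^ ω`, and the enumeration is strictly order-reversing. `e α` is the element
written `K[α]`. -/
structure OrdEnum (K : Set ℝ) where
  e : Ordinal.{0} → ℝ
  mem : ∀ α ≤ wOmega, e α ∈ K
  surj : ∀ x ∈ K, ∃ α ≤ wOmega, e α = x
  anti : ∀ ⦃α β : Ordinal.{0}⦄, α ≤ wOmega → β ≤ wOmega → (α < β ↔ e β < e α)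

/-- An enumeration of a set `S ⊆ ℝ` of reverse-order type `ω ^ ω` (indices `α < ω ^ ω`),
strictly order-reversing; `e α` is the element written `S[α]`. -/
structure SubEnum (S : Set ℝ) where
  e : Ordinal.{0} → ℝ
  mem : ∀ α < wOmega, e α ∈ S
  surj : ∀ x ∈ S, ∃ α < wOmega, e α = x
  anti : ∀ ⦃α β : Ordinal.{0}⦄, α < wOmega → β < wOmega → (α < β ↔ e β < e α)

/-- A self-similar compact set of ratio `ρ > 1` and module `μ ≥ 1`:
a compact `K ⊆ [0, ∞)`, well-ordered by the reverse usual order with order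
type `ω ^ ω + 1`, satisfying `ρ • K^(μ) = K`. -/
def SelfSimilar (K : Set ℝ) (ρ : ℝ) (μ : ℕ) : Prop :=
  IsCompact K ∧ K ⊆ Set.Ici 0 ∧ 1 < ρ ∧ 1 ≤ μ ∧
    (fun x => ρ * x) '' iterDeriv K μ = K ∧ Nonempty (OrdEnum K)

/-!
Since `K^(μ) = K / ρ` and derived sets commute with the homeomorphism `x ↦ x / ρ`, iterating
gives `K^(u + nμ) = K^(u) / ρ^n`, hence `T_{u + nμ} = T_u / ρ^n`. The derived sets of the closed
set `K` decrease, so the layers `T_u` are disjoint. A point `x > 0` of `K` leaves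
`K^(nμ) = K / ρ^n ⊆ [0, max K / ρ^n]` for large `n`, so it lies in some `T_u`; while `0` never
does, because `0 ∈ K^(u)` forces `0 = 0 / ρ^(u+1) ∈ K^((u+1)μ) ⊆ K^(u+1)`. Writing
`u = u % μ + (u / μ) μ` then gives the decomposition of `K \ {0}`.
-/

theorem Homeomorph.image_derivedSet {X Y : Type*} [TopologicalSpace X] [TopologicalSpace Y]
    (e : X ≃ₜ Y) (A : Set X) : e '' derivedSet A = derivedSet (e '' A) := by
  refine (e.continuous.image_derivedSet e.injective).antisymm fun y hy => ?_
  have hback := e.symm.continuous.image_derivedSet e.symm.injective (A := e '' A)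
  simp only [image_image, Homeomorph.symm_apply_apply, image_id'] at hback
  exact ⟨e.symm y, hback ⟨y, hy, rfl⟩, e.apply_symm_apply y⟩

theorem Antitone.pairwise_disjoint_sdiff_succ {α : Type*} {s : ℕ → Set α} (hs : Antitone s) :
    Pairwise (Function.onFun Disjoint fun n => s n \ s (n + 1)) := by
  refine (pairwise_disjoint_on _).mpr fun m n hmn => disjoint_left.mpr fun x hm hn => ?_
  exact hm.2 (hs hmn hn.1)

theorem exists_mem_sdiff_succ_of_notMem {α : Type*} {s : ℕ → Set α} {x : α} (h₀ : x ∈ s 0) :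
    ∀ {m}, x ∉ s m → ∃ n, x ∈ s n \ s (n + 1)
  | 0, hm => absurd h₀ hm
  | m + 1, hm => by
    by_cases hxm : x ∈ s m
    · exact ⟨m, hxm, hm⟩
    · exact exists_mem_sdiff_succ_of_notMem h₀ hxm

theorem iUnion_eq_iUnion_mod_add_mul {α : Type*} (f : ℕ → Set α) {μ : ℕ} (hμ : 0 < μ) :
    ⋃ m, f m = ⋃ n : ℕ, ⋃ u : ℕ, ⋃ _ : u < μ, f (u + n * μ) := by
  ext x
  simp only [mem_iUnion]
  constructor
  · rintro ⟨m, hm⟩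
    exact ⟨m / μ, m % μ, Nat.mod_lt m hμ, by rwa [Nat.mod_add_div']⟩
  · rintro ⟨n, u, -, hx⟩
    exact ⟨_, hx⟩

section iterDeriv

variable {A : Set ℝ}

theorem iterDeriv_succ (A : Set ℝ) (n : ℕ) :
    iterDeriv A (n + 1) = derivedSet (iterDeriv A n) :=
  Function.iterate_succ_apply' _ _ _

theorem iterDeriv_add (A : Set ℝ) (m n : ℕ) :
    iterDeriv A (m + n) = iterDeriv (iterDeriv A n) m :=
  Function.iterate_add_apply _ m n A

theorem isClosed_iterDeriv (hA : IsClosed A) : ∀ n, IsClosed (iterDeriv A n)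
  | 0 => hA
  | n + 1 => by rw [iterDeriv_succ]; exact isClosed_derivedSet _

theorem IsClosed.antitone_iterDeriv (hA : IsClosed A) : Antitone (iterDeriv A) :=
  antitone_nat_of_succ_le fun n => by
    rw [iterDeriv_succ]
    exact (isClosed_iff_derivedSet_subset _).mp (isClosed_iterDeriv hA n)

theorem iterDeriv_image_homeomorph (e : ℝ ≃ₜ ℝ) (A : Set ℝ) (n : ℕ) :
    iterDeriv (e '' A) n = e '' iterDeriv A n := by
  induction n with
  | zero => rfl
  | succ n ih => rw [iterDeriv_succ, ih, ← e.image_derivedSet, iterDeriv_succ]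

theorem iterDeriv_image_div {c : ℝ} (hc : c ≠ 0) (A : Set ℝ) (n : ℕ) :
    iterDeriv ((· / c) '' A) n = (· / c) '' iterDeriv A n := by
  have hdiv : (· / c) = Homeomorph.mulRight₀ c⁻¹ (inv_ne_zero hc) :=
    funext fun x => div_eq_mul_inv x c
  rw [hdiv]
  exact iterDeriv_image_homeomorph _ A n

end iterDeriv

namespace SelfSimilar

variable {K : Set ℝ} {ρ : ℝ} {μ : ℕ}

theorem one_lt_ratio (h : SelfSimilar K ρ μ) : 1 < ρ := h.2.2.1

theorem ratio_ne_zero (h : SelfSimilar K ρ μ) : ρ ≠ 0 := (zero_lt_one.trans h.one_lt_ratio).ne'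

theorem module_pos (h : SelfSimilar K ρ μ) : 0 < μ := h.2.2.2.1

theorem antitone_iterDeriv (h : SelfSimilar K ρ μ) : Antitone (iterDeriv K) :=
  h.1.isClosed.antitone_iterDeriv

theorem iterDeriv_module (h : SelfSimilar K ρ μ) : iterDeriv K μ = (· / ρ) '' K := by
  have hρ := h.ratio_ne_zero
  obtain ⟨-, -, -, -, hself, -⟩ := h
  conv_rhs => rw [← hself, image_image]
  simp [mul_div_cancel_left₀ _ hρ]

theorem iterDeriv_add_mul (h : SelfSimilar K ρ μ) (u n : ℕ) :
    iterDeriv K (u + n * μ) = (· / ρ ^ n) '' iterDeriv K u := by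
  induction n with
  | zero => simp
  | succ n ih =>
    rw [add_mul, one_mul, ← add_assoc, iterDeriv_add, h.iterDeriv_module,
      iterDeriv_image_div h.ratio_ne_zero, ih, image_image]
    simp only [pow_succ, div_div]

theorem exists_notMem_iterDeriv (h : SelfSimilar K ρ μ) {x : ℝ} (hx : 0 < x) :
    ∃ m, x ∉ iterDeriv K m := by
  obtain ⟨M, hM⟩ := h.1.bddAbove
  obtain ⟨n, hn⟩ := pow_unbounded_of_one_lt (M / x) h.one_lt_ratio
  refine ⟨0 + n * μ, fun hmem => ?_⟩
  rw [h.iterDeriv_add_mul] at hmem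
  obtain ⟨y, hyK, rfl⟩ := hmem
  have hρn : ρ ^ n ≠ 0 := pow_ne_zero n h.ratio_ne_zero
  rw [div_lt_iff₀ hx, mul_div_cancel₀ y hρn] at hn
  exact (hM hyK).not_gt hn

theorem zero_notMem_sdiff_iterDeriv (h : SelfSimilar K ρ μ) (u : ℕ) :
    (0 : ℝ) ∉ iterDeriv K u \ iterDeriv K (u + 1) := by
  rintro ⟨hu, hu₁⟩
  have hscaled : (0 : ℝ) ∈ iterDeriv K (0 + (u + 1) * μ) := by
    rw [h.iterDeriv_add_mul]
    exact ⟨0, h.antitone_iterDeriv (Nat.zero_le u) hu, zero_div _⟩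
  exact hu₁ (h.antitone_iterDeriv (by nlinarith [h.module_pos]) hscaled)

theorem sdiff_zero_eq_iUnion (h : SelfSimilar K ρ μ) :
    K \ {0} = ⋃ u, iterDeriv K u \ iterDeriv K (u + 1) := by
  ext x
  simp only [Set.mem_sdiff, mem_singleton_iff, mem_iUnion]
  constructor
  · rintro ⟨hxK, hx₀⟩
    have hx : 0 < x := (h.2.1 hxK).lt_of_ne' hx₀
    obtain ⟨m, hm⟩ := h.exists_notMem_iterDeriv hx
    exact exists_mem_sdiff_succ_of_notMem hxK hm
  · rintro ⟨u, hx⟩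
    refine ⟨h.antitone_iterDeriv (Nat.zero_le u) hx.1, ?_⟩
    rintro rfl
    exact h.zero_notMem_sdiff_iterDeriv u hx

end SelfSimilar

theorem selfSimilar_decomposition (K : Set ℝ) (ρ : ℝ) (μ : ℕ)
    (h : SelfSimilar K ρ μ) (T : ℕ → Set ℝ)
    (hT : ∀ u, T u = iterDeriv K u \ iterDeriv K (u + 1)) :
    Pairwise (Function.onFun Disjoint T) ∧
    (∀ u n : ℕ, T (u + n * μ) = (fun x => x / ρ ^ n) '' T u) ∧
    K \ {0} = ⋃ n : ℕ, ⋃ u : ℕ, ⋃ _ : u < μ, (fun x => x / ρ ^ n) '' T u := by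
  have hscale : ∀ u n : ℕ, T (u + n * μ) = (fun x => x / ρ ^ n) '' T u := fun u n => by
    rw [hT, hT, add_right_comm, h.iterDeriv_add_mul, h.iterDeriv_add_mul,
      image_sdiff fun _ _ => (div_left_inj' (pow_ne_zero n h.ratio_ne_zero)).mp]
  refine ⟨?_, hscale, ?_⟩
  · rw [funext hT]
    exact Antitone.pairwise_disjoint_sdiff_succ h.antitone_iterDeriv
  · simp only [← hscale]
    rw [h.sdiff_zero_eq_iUnion, ← funext hT, iUnion_eq_iUnion_mod_add_mul T h.module_pos]
end

section
/- For every natural number n not divisible by 3, there exists a ≥ 0 such that n·3^a is stable, where m is called stable if ‖3^k·m‖ = ‖m‖ + 3k for all k ≥ 0; moreover, if n·3^a and n·3^b are both stable (a ≤ b), then ‖n·3^b‖ = ‖n·3^a‖ + 3(b−a), so the stable complexity ‖n‖_st := ‖n·3^a‖ − 3a is well-defined. -/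
inductive ExprCost : ℕ → ℕ → Prop
  | one : ExprCost 1 1
  | add {a b c d : ℕ} : ExprCost a c → ExprCost b d → ExprCost (a + b) (c + d)
  | mul {a b c d : ℕ} : ExprCost a c → ExprCost b d → ExprCost (a * b) (c + d)

noncomputable def cpx (n : ℕ) : ℕ := sInf {c | ExprCost n c}

def Stable (m : ℕ) : Prop := ∀ k : ℕ, cpx (3 ^ k * m) = cpx m + 3 * k

lemma ExprCost.pos {n c : ℕ} (h : ExprCost n c) : 1 ≤ n ∧ 1 ≤ c := by
  induction h with
  | one => exact ⟨le_refl 1, le_refl 1⟩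
  | add _ _ ih1 ih2 => omega
  | mul _ _ ih1 ih2 =>
      refine ⟨?_, by omega⟩
      have := Nat.mul_le_mul ih1.1 ih2.1
      simpa using this

lemma exprCost_self (n : ℕ) (hn : 1 ≤ n) : ExprCost n n := by
  induction n with
  | zero => omega
  | succ m ih =>
      rcases Nat.eq_or_lt_of_le hn with h | h
      · simpa [← h] using ExprCost.one
      · have hm : 1 ≤ m := by omega
        exact ExprCost.add (ih hm) ExprCost.one

lemma cpx_spec (n : ℕ) (hn : 1 ≤ n) : ExprCost n (cpx n) :=
  Nat.sInf_mem ⟨n, exprCost_self n hn⟩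

lemma cpx_le {n c : ℕ} (h : ExprCost n c) : cpx n ≤ c := Nat.sInf_le h

/-- key arithmetic fact for the addition case of the lower bound -/
lemma add_cube_aux (a b c d : ℕ) (ha1 : 1 ≤ a) (hb1 : 1 ≤ b) (hc : 1 ≤ c)
    (hd : 1 ≤ d) (ha : a ^ 3 ≤ 3 ^ c) (hb : b ^ 3 ≤ 3 ^ d) (hcd : c ≤ d) :
    (a + b) ^ 3 ≤ 3 ^ (c + d) := by
  rcases Nat.lt_or_ge c 2 with hc2 | hc2
  · -- c = 1, hence a = 1
    have hc1 : c = 1 := by omega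
    subst hc1
    have ha' : a = 1 := by
      by_contra hne
      have h2 : 2 ≤ a := by omega
      have : 2 ^ 3 ≤ a ^ 3 := Nat.pow_le_pow_left h2 3
      norm_num at ha this
      omega
    subst ha'
    rcases Nat.lt_or_ge b 3 with hb3 | hb3
    · interval_cases b
      · have : 3 ^ 1 ≤ 3 ^ d := Nat.pow_le_pow_right (by norm_num) hd
        calc (1+1)^3 = 8 := by norm_num
          _ ≤ 3 * 3 ^ d := by omega
          _ = 3 ^ (1 + d) := by rw [pow_add]; ring
      · have hd2 : 2 ≤ d := by
          by_contra h
          have : d = 1 := by omega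
          subst this; norm_num at hb
        have : 3 ^ 2 ≤ 3 ^ d := Nat.pow_le_pow_right (by norm_num) hd2
        calc (1+2)^3 = 27 := by norm_num
          _ ≤ 3 * 3 ^ d := by omega
          _ = 3 ^ (1 + d) := by rw [pow_add]; ring
    · have e1 : 3 * b ≤ b * b := by nlinarith
      have e2 : 3 * (b * b) ≤ b * (b * b) := by nlinarith
      have h1 : (1 + b) ^ 3 ≤ 3 * b ^ 3 := by ring_nf; nlinarith
      calc (1 + b) ^ 3 ≤ 3 * b ^ 3 := h1
        _ ≤ 3 * 3 ^ d := by omega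
        _ = 3 ^ (1 + d) := by rw [pow_add]; ring
  · -- c, d ≥ 2
    have hd2 : 2 ≤ d := le_trans hc2 hcd
    have hX : 9 ≤ 3 ^ c := by calc (9:ℕ) = 3^2 := by norm_num
                                  _ ≤ 3 ^ c := Nat.pow_le_pow_right (by norm_num) hc2
    have hY : 9 ≤ 3 ^ d := by calc (9:ℕ) = 3^2 := by norm_num
                                  _ ≤ 3 ^ d := Nat.pow_le_pow_right (by norm_num) hd2
    have h1 : (a + b) ^ 3 ≤ 4 * a ^ 3 + 4 * b ^ 3 := by
      zify
      nlinarith [mul_nonneg (by positivity : (0:ℤ) ≤ (a:ℤ) + b) (sq_nonneg ((a:ℤ) - b))]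
    have h2 : 4 * (3 ^ c) + 4 * (3 ^ d) ≤ 3 ^ c * 3 ^ d := by nlinarith
    calc (a + b) ^ 3 ≤ 4 * a ^ 3 + 4 * b ^ 3 := h1
      _ ≤ 4 * 3 ^ c + 4 * 3 ^ d := by omega
      _ ≤ 3 ^ c * 3 ^ d := h2
      _ = 3 ^ (c + d) := (pow_add 3 c d).symm

lemma cube_le {n c : ℕ} (h : ExprCost n c) : n ^ 3 ≤ 3 ^ c := by
  induction h with
  | one => norm_num
  | @add a b c d h1 h2 ih1 ih2 =>
      rcases le_total c d with hcd | hcd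
      · exact add_cube_aux a b c d h1.pos.1 h2.pos.1 h1.pos.2 h2.pos.2 ih1 ih2 hcd
      · have := add_cube_aux b a d c h2.pos.1 h1.pos.1 h2.pos.2 h1.pos.2 ih2 ih1 hcd
        rw [add_comm a b, add_comm c d]; exact this
  | @mul a b c d h1 h2 ih1 ih2 =>
      calc (a * b) ^ 3 = a ^ 3 * b ^ 3 := by ring
        _ ≤ 3 ^ c * 3 ^ d := Nat.mul_le_mul ih1 ih2
        _ = 3 ^ (c + d) := (pow_add 3 c d).symm

lemma cpx_three_mul (m : ℕ) (hm : 1 ≤ m) : cpx (3 * m) ≤ cpx m + 3 := by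
  have h3 : ExprCost 3 3 := by
    have := ExprCost.add (ExprCost.add ExprCost.one ExprCost.one) ExprCost.one
    simpa using this
  have := ExprCost.mul h3 (cpx_spec m hm)
  have := cpx_le this
  omega

lemma cpx_lower (n k : ℕ) (hn : 1 ≤ n) : 3 * k ≤ cpx (3 ^ k * n) := by
  have hpos : 1 ≤ 3 ^ k * n := Nat.one_le_iff_ne_zero.2 (by positivity)
  have h := cube_le (cpx_spec _ hpos)
  have h2 : 3 ^ (3 * k) ≤ 3 ^ (cpx (3 ^ k * n)) := by
    calc 3 ^ (3 * k) = (3 ^ k) ^ 3 := by rw [← pow_mul, Nat.mul_comm]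
      _ ≤ (3 ^ k * n) ^ 3 := Nat.pow_le_pow_left (Nat.le_mul_of_pos_right _ hn) 3
      _ ≤ 3 ^ (cpx (3 ^ k * n)) := h
  exact (Nat.pow_le_pow_iff_right (by norm_num)).1 h2

theorem stable_multiple_exists (n : ℕ) (hn : 0 < n) (h3 : ¬ (3 ∣ n)) :
    (∃ a : ℕ, Stable (n * 3 ^ a)) ∧
    ∀ a b : ℕ, a ≤ b → Stable (n * 3 ^ a) → Stable (n * 3 ^ b) →
      cpx (n * 3 ^ b) = cpx (n * 3 ^ a) + 3 * (b - a) := by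
  have hn1 : 1 ≤ n := hn
  set g : ℕ → ℕ := fun k => cpx (3 ^ k * n) with hg
  have glow : ∀ k, 3 * k ≤ g k := fun k => cpx_lower n k hn1
  have gstep : ∀ k, g (k + 1) ≤ g k + 3 := by
    intro k
    have hpos : 1 ≤ 3 ^ k * n := Nat.one_le_iff_ne_zero.2 (by positivity)
    have := cpx_three_mul (3 ^ k * n) hpos
    have heq : 3 * (3 ^ k * n) = 3 ^ (k + 1) * n := by ring
    simpa [hg, heq] using this
  set h : ℕ → ℕ := fun k => g k - 3 * k with hh
  have hstep : ∀ k, h (k + 1) ≤ h k := by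
    intro k
    have := gstep k
    have := glow k
    have := glow (k + 1)
    simp only [hh]
    omega
  have hanti : ∀ j k, j ≤ k → h k ≤ h j := by
    intro j k hjk
    induction k with
    | zero => simp_all
    | succ m ih =>
        rcases Nat.eq_or_lt_of_le hjk with he | hl
        · rw [he]
        · exact le_trans (hstep m) (ih (by omega))
  -- minimum of h
  obtain ⟨a, ha⟩ : ∃ a, h a = sInf (Set.range h) :=
    Nat.sInf_mem (Set.range_nonempty h)
  have hconst : ∀ k, a ≤ k → h k = h a := by
    intro k hk
    have h1 : h k ≤ h a := hanti a k hk
    have h2 : h a ≤ h k := ha ▸ Nat.sInf_le ⟨k, rfl⟩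
    omega
  constructor
  · refine ⟨a, ?_⟩
    intro k
    have heq : 3 ^ k * (n * 3 ^ a) = 3 ^ (a + k) * n := by rw [pow_add]; ring
    have heq2 : n * 3 ^ a = 3 ^ a * n := by ring
    rw [heq, heq2]
    have hc := hconst (a + k) (by omega)
    have l1 := glow (a + k)
    have l2 := glow a
    simp only [hh] at hc
    show g (a + k) = g a + 3 * k
    omega
  · intro a b hab hsa _
    have := hsa (b - a)
    have heq : 3 ^ (b - a) * (n * 3 ^ a) = n * 3 ^ b := by
      rw [mul_comm, mul_assoc, ← pow_add, Nat.add_sub_cancel' hab]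
    rw [heq] at this
    exact this
end
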